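/- Let b : ℝⁿ → ℝⁿ be twice continuously differentiable, a : ℝⁿ → (n×n real symmetric matrices) continuously differentiable, and V : ℝⁿ → ℝ three times continuously differentiable in a neighborhood of a point x̄ with b(x̄) = 0 and ∇V(x̄) = 0, and suppose V satisfies the Hamilton–Jacobi equation ⟨∇V(x), b(x)⟩ + ½⟨∇V(x), a(x)∇V(x)⟩ = 0 in that neighborhood. Then the Hessian H = ∇²V(x̄) satisfies the matrix Riccati equation H·∇b(x̄) + (∇b(x̄))ᵀ·H + H·a(x̄)·H = 0; moreover, if H is invertible, then setting Q = −∇b(x̄) one has H⁻¹Qᵀ + QH⁻¹ = a(x̄). -/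

import Mathlib

/-!
Along a line `t ↦ x̄ + t • v`, the Hamilton–Jacobi equation says that the Hamiltonian
`⟨p, β⟩ + ½ ⟨p, A p⟩` vanishes at `β = b(x̄ + t • v)`, `A = a(x̄ + t • v)`, `p = ∇V(x̄ + t • v)`.
It is homogeneous of degree two in `(β, p)`, and `β`, `p` vanish at `t = 0`, so dividing by `t²`
and letting `t → 0` gives `⟨H v, ∇b v⟩ + ½ ⟨H v, a(x̄) H v⟩ = 0` for every `v`. A quadratic form
vanishes identically iff the symmetric part of its matrix does, and the symmetric part of
`H ∇b + ½ H a H` is half the Riccati expression. Conjugating the Riccati equation by `H⁻¹` gives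
the Lyapunov equation.
-/

open scoped BigOperators

/-- Euclidean inner product on ℝⁿ. -/
noncomputable def dotp {n : ℕ} (u v : Fin n → ℝ) : ℝ := ∑ i, u i * v i

/-- Partial derivative ∂f/∂xᵢ. -/
noncomputable def pd {n : ℕ} (f : (Fin n → ℝ) → ℝ) (i : Fin n) (x : Fin n → ℝ) : ℝ :=
  fderiv ℝ f x (Pi.single i 1)

/-- Gradient of a scalar field on ℝⁿ. -/
noncomputable def grad {n : ℕ} (f : (Fin n → ℝ) → ℝ) (x : Fin n → ℝ) : Fin n → ℝ :=
  fun i => pd f i x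

open Filter Matrix
open scoped Topology

noncomputable def hamiltonian {ι : Type*} [Fintype ι] (b : ι → ℝ) (a : Matrix ι ι ℝ)
    (p : ι → ℝ) : ℝ :=
  p ⬝ᵥ b + (1 / 2) * p ⬝ᵥ (a *ᵥ p)

theorem hamiltonian_smul {ι : Type*} [Fintype ι] (c : ℝ) (b : ι → ℝ) (a : Matrix ι ι ℝ)
    (p : ι → ℝ) : hamiltonian (c • b) a (c • p) = c ^ 2 * hamiltonian b a p := by
  simp only [hamiltonian, mulVec_smul, smul_dotProduct, dotProduct_smul, smul_eq_mul]
  ring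

theorem continuous_hamiltonian {ι : Type*} [Fintype ι] :
    Continuous fun q : (ι → ℝ) × Matrix ι ι ℝ × (ι → ℝ) => hamiltonian q.1 q.2.1 q.2.2 := by
  unfold hamiltonian
  fun_prop

theorem hamiltonian_eq_zero_of_hasLineDerivAt {ι E : Type*} [Fintype ι]
    [NormedAddCommGroup E] [NormedSpace ℝ E] {b g : E → ι → ℝ} {a : E → Matrix ι ι ℝ}
    {x v : E} {b' g' : ι → ℝ} (hb : HasLineDerivAt ℝ b b' x v) (hg : HasLineDerivAt ℝ g g' x v)
    (ha : ContinuousAt a x) (hb0 : b x = 0) (hg0 : g x = 0)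
    (hHJ : ∀ᶠ y in 𝓝 x, hamiltonian (b y) (a y) (g y) = 0) :
    hamiltonian b' (a x) g' = 0 := by
  have hline : Tendsto (fun t : ℝ => x + t • v) (𝓝[≠] 0) (𝓝 x) :=
    (Continuous.tendsto' (by fun_prop) 0 x (by simp)).mono_left nhdsWithin_le_nhds
  have hslope_b := hb.tendsto_slope_zero
  have hslope_g := hg.tendsto_slope_zero
  simp only [hb0, hg0, sub_zero] at hslope_b hslope_g
  have hlim := (continuous_hamiltonian.tendsto _).comp
    (hslope_b.prodMk_nhds ((ha.tendsto.comp hline).prodMk_nhds hslope_g))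
  refine tendsto_nhds_unique hlim (tendsto_const_nhds.congr' ?_)
  filter_upwards [hline.eventually hHJ] with t ht
  simp only [Function.comp_apply, hamiltonian_smul, ht, mul_zero]

noncomputable def jacobianMatrix {ι κ : Type*} [DecidableEq ι] (f : (ι → ℝ) → κ → ℝ)
    (x : ι → ℝ) : Matrix κ ι ℝ :=
  of fun i j => fderiv ℝ (fun y => f y i) x (Pi.single j 1)

theorem DifferentiableAt.hasLineDerivAt_jacobianMatrix_mulVec {ι κ : Type*} [Fintype ι]
    [DecidableEq ι] [Fintype κ]
    {f : (ι → ℝ) → κ → ℝ} {x : ι → ℝ} (hf : DifferentiableAt ℝ f x) (v : ι → ℝ) :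
    HasLineDerivAt ℝ f (jacobianMatrix f x *ᵥ v) x v := by
  suffices jacobianMatrix f x *ᵥ v = fderiv ℝ f x v from this ▸ hf.hasFDerivAt.hasLineDerivAt v
  ext i
  conv_rhs => rw [pi_eq_sum_univ' v]
  simp [jacobianMatrix, mulVec, dotProduct, fderiv_apply hf, mul_comm]

theorem jacobianMatrix_grad_isSymm {n : ℕ} {V : (Fin n → ℝ) → ℝ} {x : Fin n → ℝ}
    (hV : ContDiffAt ℝ 2 V x) : (jacobianMatrix (grad V) x).IsSymm := by
  have hd : DifferentiableAt ℝ (fderiv ℝ V) x :=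
    (hV.fderiv_right le_rfl).differentiableAt one_ne_zero
  refine IsSymm.ext fun i j => ?_
  simp only [jacobianMatrix, grad, pd, of_apply, fderiv_clm_apply hd (differentiableAt_const _),
    fderiv_fun_const, Pi.zero_apply, ContinuousLinearMap.comp_zero, zero_add,
    ContinuousLinearMap.flip_apply]
  exact (hV.isSymmSndFDerivAt (by simp)) _ _

theorem Matrix.add_transpose_eq_zero_of_forall_dotProduct_mulVec_self_eq_zero {ι R : Type*}
    [Fintype ι] [DecidableEq ι] [CommRing R] {M : Matrix ι ι R}
    (h : ∀ v, v ⬝ᵥ (M *ᵥ v) = 0) : M + Mᵀ = 0 := by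
  ext i j
  have hii := h (Pi.single i 1)
  have hjj := h (Pi.single j 1)
  have hij := h (Pi.single i 1 + Pi.single j 1)
  simp only [mulVec_add, dotProduct_add, add_dotProduct, mulVec_single_one, single_one_dotProduct,
    col_apply] at hii hjj hij
  simp only [add_apply, transpose_apply, zero_apply]
  linear_combination hij - hii - hjj

theorem Matrix.inv_mul_transpose_add_mul_inv_eq_of_riccati {ι R : Type*} [Fintype ι] [DecidableEq ι]
    [CommRing R] {H D A : Matrix ι ι R} (hH : IsUnit H)
    (h : H * D + Dᵀ * H + H * A * H = 0) : H⁻¹ * (-D)ᵀ + (-D) * H⁻¹ = A := by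
  have hd : IsUnit H.det := (isUnit_iff_isUnit_det H).mp hH
  have h' := congr(H⁻¹ * $h * H⁻¹)
  simp only [mul_add, add_mul, ← mul_assoc, nonsing_inv_mul H hd, one_mul, mul_zero, zero_mul] at h'
  simp only [mul_assoc, mul_nonsing_inv H hd, mul_one] at h'
  rw [transpose_neg, neg_mul, mul_neg]
  linear_combination (norm := abel) -h'

theorem riccati_of_forall_hamiltonian_eq_zero {ι : Type*} [Fintype ι] [DecidableEq ι]
    {H D A : Matrix ι ι ℝ} (hH : H.IsSymm) (hA : A.IsSymm)
    (h : ∀ v, hamiltonian (D *ᵥ v) A (H *ᵥ v) = 0) :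
    H * D + Dᵀ * H + H * A * H = 0 := by
  have hH_dotProduct : ∀ u w, (H *ᵥ u) ⬝ᵥ w = u ⬝ᵥ (H *ᵥ w) := fun u w => by
    rw [dotProduct_mulVec, ← mulVec_transpose, hH.eq]
  set M := H * D + (1 / 2 : ℝ) • (H * A * H)
  have hM : ∀ v, v ⬝ᵥ (M *ᵥ v) = 0 := fun v => by
    rw [← h v, hamiltonian, hH_dotProduct, hH_dotProduct]
    simp only [M, add_mulVec, smul_mulVec, dotProduct_add, dotProduct_smul, smul_eq_mul,
      mulVec_mulVec, mul_assoc]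
  have hskew := add_transpose_eq_zero_of_forall_dotProduct_mulVec_self_eq_zero hM
  simp only [M, transpose_add, transpose_smul, transpose_mul, hH.eq, hA.eq, ← mul_assoc] at hskew
  rw [← hskew]
  module

/-- Near a fixed point x̄ of ẋ = b(x) at which ∇V(x̄) = 0, the Hessian H = ∇²V(x̄) of a
solution V of the Hamilton–Jacobi equation satisfies the matrix Riccati equation
H∇b(x̄) + (∇b(x̄))ᵀH + H a(x̄) H = 0; if moreover H is invertible then, with Q = −∇b(x̄),
H⁻¹Qᵀ + QH⁻¹ = a(x̄). -/
theorem hessian_riccati_at_fixed_point {n : ℕ}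
    (b : (Fin n → ℝ) → Fin n → ℝ)
    (a : (Fin n → ℝ) → Matrix (Fin n) (Fin n) ℝ)
    (V : (Fin n → ℝ) → ℝ)
    (xbar : Fin n → ℝ) (U : Set (Fin n → ℝ)) (hU : U ∈ nhds xbar)
    (hb : ContDiffOn ℝ 2 b U)
    (ha : ∀ i j, ContDiffOn ℝ 1 (fun x => a x i j) U)
    (hsym : ∀ x i j, a x i j = a x j i)
    (hV : ContDiffOn ℝ 3 V U)
    (hbfix : b xbar = 0) (hgradfix : grad V xbar = 0)
    (hHJ : ∀ x ∈ U, dotp (grad V x) (b x)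
        + (1 / 2) * dotp (grad V x) ((a x).mulVec (grad V x)) = 0)
    (H Db : Matrix (Fin n) (Fin n) ℝ)
    (hH : H = Matrix.of fun i j => pd (fun y => pd V j y) i xbar)
    (hDb : Db = Matrix.of fun i j => fderiv ℝ (fun y => b y i) xbar (Pi.single j 1)) :
    H * Db + Db.transpose * H + H * a xbar * H = 0 ∧
      (IsUnit H → H⁻¹ * (-Db).transpose + (-Db) * H⁻¹ = a xbar) := by
  have hV2 : ContDiffAt ℝ 2 V xbar := (hV.contDiffAt hU).of_le (by norm_num)
  -- `hH` presents `H` as the transpose of the Jacobian matrix of `∇V`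
  have hH' : H = jacobianMatrix (grad V) xbar := hH.trans (jacobianMatrix_grad_isSymm hV2)
  have hHsymm : H.IsSymm := hH' ▸ jacobianMatrix_grad_isSymm hV2
  have hgrad : DifferentiableAt ℝ (grad V) xbar :=
    differentiableAt_pi.2 fun i =>
      ((hV2.fderiv_right le_rfl).differentiableAt one_ne_zero).clm_apply (differentiableAt_const _)
  have hbdiff : DifferentiableAt ℝ b xbar := (hb.contDiffAt hU).differentiableAt (by norm_num)
  have hacont : ContinuousAt a xbar :=
    continuousAt_pi.2 fun i => continuousAt_pi.2 fun j => ((ha i j).contDiffAt hU).continuousAt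
  have hquad : ∀ v, hamiltonian (Db *ᵥ v) (a xbar) (H *ᵥ v) = 0 := fun v => by
    rw [hH', hDb]
    exact hamiltonian_eq_zero_of_hasLineDerivAt (hbdiff.hasLineDerivAt_jacobianMatrix_mulVec v)
      (hgrad.hasLineDerivAt_jacobianMatrix_mulVec v) hacont hbfix hgradfix
      (eventually_of_mem hU hHJ)
  have hasymm : (a xbar).IsSymm := IsSymm.ext fun i j => hsym xbar j i
  have hriccati := riccati_of_forall_hamiltonian_eq_zero hHsymm hasymm hquad
  exact ⟨hriccati, fun hunit => inv_mul_transpose_add_mul_inv_eq_of_riccati hunit hriccati⟩
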